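/- For real α with −1/2 < α < 0, ∫₀¹ x^(α−1)((1−x)^α − 1) dx + 1/α = Γ(α)Γ(α+1)/Γ(2α+1). -/

import Mathlib

/-!
On `(0, 1)` the function `F x = x ^ α * ((1 - x) ^ (α + 1) - 1)` has derivative
`α * x ^ (α - 1) * ((1 - x) ^ α - 1) - (2 * α + 1) * x ^ α * (1 - x) ^ α`.
For `-1 < α ≤ 0` both terms are integrable, `F → 0` at `0⁺` and `F 1 = -1`, so
`α * I - (2 * α + 1) * B(α + 1, α + 1) = -1` for the regularized integral `I`.
Evaluating the Beta integral as `Γ(α + 1)² / Γ(2α + 2)` and using `Γ(s + 1) = s Γ(s)` gives the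
claim; `-1/2 < α` keeps `Γ(2α + 1)` away from zero.
-/

open MeasureTheory Set Filter Topology

lemma ofReal_rpow_mul_one_sub_rpow {a b x : ℝ} (hx : x ∈ Icc (0 : ℝ) 1) :
    ((x ^ a * (1 - x) ^ b : ℝ) : ℂ) = (x : ℂ) ^ (a : ℂ) * (1 - (x : ℂ)) ^ (b : ℂ) := by
  rw [Complex.ofReal_mul, Complex.ofReal_cpow hx.1, Complex.ofReal_cpow (sub_nonneg.2 hx.2),
    Complex.ofReal_sub, Complex.ofReal_one]

lemma intervalIntegrable_rpow_mul_one_sub_rpow {a b : ℝ} (ha : -1 < a) (hb : -1 < b) :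
    IntervalIntegrable (fun x : ℝ => x ^ a * (1 - x) ^ b) volume 0 1 := by
  have hC := Complex.betaIntegral_convergent (u := (a + 1 : ℝ)) (v := (b + 1 : ℝ))
    (by simp; linarith) (by simp; linarith)
  rw [intervalIntegrable_iff_integrableOn_Icc_of_le zero_le_one] at hC ⊢
  refine IntegrableOn.congr_fun hC.re (fun x hx => ?_) measurableSet_Icc
  push_cast
  simp only [add_sub_cancel_right, ← ofReal_rpow_mul_one_sub_rpow hx, RCLike.re_to_complex,
    Complex.ofReal_re]

theorem integral_rpow_mul_one_sub_rpow {a b : ℝ} (ha : 0 < a) (hb : 0 < b) :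
    ∫ x in (0 : ℝ)..1, x ^ (a - 1) * (1 - x) ^ (b - 1)
      = Real.Gamma a * Real.Gamma b / Real.Gamma (a + b) := by
  apply Complex.ofReal_injective
  have h := Complex.betaIntegral_eq_Gamma_mul_div a b (by simpa) (by simpa)
  push_cast [← Complex.Gamma_ofReal]
  rw [← h, Complex.betaIntegral, ← intervalIntegral.integral_ofReal]
  refine intervalIntegral.integral_congr fun x hx => ?_
  rw [uIcc_of_le zero_le_one] at hx
  push_cast [ofReal_rpow_mul_one_sub_rpow hx]
  rfl

lemma one_sub_rpow_sub_one_le {α x : ℝ} (hα : -1 ≤ α) (hx : x ∈ Ico (0 : ℝ) 1) :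
    (1 - x) ^ α - 1 ≤ x * (1 - x) ^ α := by
  have hy : 0 < 1 - x := sub_pos.2 hx.2
  have hle : (1 - x) ^ (α + 1) ≤ 1 :=
    Real.rpow_le_one hy.le (by linarith [hx.1]) (by linarith)
  rw [Real.rpow_add_one hy.ne'] at hle
  linarith

lemma intervalIntegrable_rpow_sub_one_mul_one_sub_rpow_sub_one {α : ℝ} (hα : -1 < α)
    (hα' : α ≤ 0) :
    IntervalIntegrable (fun x : ℝ => x ^ (α - 1) * ((1 - x) ^ α - 1)) volume 0 1 := by
  have hB := intervalIntegrable_rpow_mul_one_sub_rpow hα hα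
  rw [intervalIntegrable_iff_integrableOn_Ioo_of_le zero_le_one] at hB ⊢
  refine hB.mono' (by fun_prop) (ae_restrict_of_forall_mem measurableSet_Ioo fun x hx => ?_)
  have hx0 : 0 ≤ x ^ (α - 1) := Real.rpow_nonneg hx.1.le _
  have h1 : 0 ≤ (1 - x) ^ α - 1 :=
    sub_nonneg.2 (Real.one_le_rpow_of_pos_of_le_one_of_nonpos (by linarith [hx.2])
      (by linarith [hx.1]) hα')
  rw [Real.norm_of_nonneg (mul_nonneg hx0 h1)]
  calc x ^ (α - 1) * ((1 - x) ^ α - 1)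
      ≤ x ^ (α - 1) * (x * (1 - x) ^ α) :=
        mul_le_mul_of_nonneg_left (one_sub_rpow_sub_one_le hα.le (Ioo_subset_Ico_self hx)) hx0
    _ = x ^ α * (1 - x) ^ α := by
        rw [← mul_assoc, ← Real.rpow_add_one hx.1.ne', sub_add_cancel]

noncomputable def regBetaPrimitive (α x : ℝ) : ℝ := x ^ α * ((1 - x) ^ (α + 1) - 1)

lemma hasDerivAt_regBetaPrimitive (α : ℝ) {x : ℝ} (hx : x ∈ Ioo (0 : ℝ) 1) :
    HasDerivAt (regBetaPrimitive α)
      (α * (x ^ (α - 1) * ((1 - x) ^ α - 1)) - (2 * α + 1) * (x ^ α * (1 - x) ^ α)) x := by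
  have hx0 : x ≠ 0 := hx.1.ne'
  have hy : 1 - x ≠ 0 := (sub_pos.2 hx.2).ne'
  have hpow : HasDerivAt (fun y : ℝ => y ^ α) (α * x ^ (α - 1)) x :=
    Real.hasDerivAt_rpow_const (Or.inl hx0)
  have hpow' : HasDerivAt (fun y : ℝ => (1 - y) ^ (α + 1)) (-1 * (α + 1) * (1 - x) ^ α) x := by
    simpa using ((hasDerivAt_id x).const_sub 1).rpow_const (p := α + 1) (Or.inl hy)
  refine (hpow.mul (hpow'.sub_const 1)).congr_deriv ?_
  rw [Real.rpow_add_one hy, Real.rpow_sub_one hx0]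
  field_simp
  ring

lemma tendsto_regBetaPrimitive_zero {α : ℝ} (hα : -1 < α) (hα' : α ≤ 0) :
    Tendsto (regBetaPrimitive α) (𝓝[>] 0) (𝓝 0) := by
  have hlim : Tendsto (fun x : ℝ => x ^ (α + 1)) (𝓝[>] 0) (𝓝 0) := by
    simpa [Real.zero_rpow (by linarith : α + 1 ≠ 0)] using
      ((Real.continuousAt_rpow_const 0 (α + 1) (Or.inr (by linarith))).tendsto.mono_left
        nhdsWithin_le_nhds)
  refine squeeze_zero_norm' ?_ hlim
  filter_upwards [Ioo_mem_nhdsGT (zero_lt_one' ℝ)] with x hx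
  have hy : 0 ≤ 1 - x := by linarith [hx.2]
  have hy' : 1 - x ≤ 1 := by linarith [hx.1]
  have hlow : 1 - x ≤ (1 - x) ^ (α + 1) := Real.self_le_rpow_of_le_one hy hy' (by linarith)
  have hup : (1 - x) ^ (α + 1) ≤ 1 := Real.rpow_le_one hy hy' (by linarith)
  rw [regBetaPrimitive, norm_mul, Real.norm_of_nonneg (Real.rpow_nonneg hx.1.le _),
    Real.norm_of_nonpos (by linarith), Real.rpow_add_one hx.1.ne']
  exact mul_le_mul_of_nonneg_left (by linarith) (Real.rpow_nonneg hx.1.le _)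

lemma continuousAt_regBetaPrimitive_one {α : ℝ} (hα : -1 < α) :
    ContinuousAt (regBetaPrimitive α) 1 := by
  unfold regBetaPrimitive
  have := Real.continuousAt_rpow_const (1 - 1) (α + 1) (Or.inr (by linarith))
  fun_prop (disch := simp)

lemma regBetaPrimitive_one {α : ℝ} (hα : -1 < α) : regBetaPrimitive α 1 = -1 := by
  simp [regBetaPrimitive, Real.zero_rpow (by linarith : α + 1 ≠ 0)]

lemma regularized_beta_integral_identity {α : ℝ} (hα : -1 < α) (hα' : α ≤ 0) :
    α * (∫ x in (0 : ℝ)..1, x ^ (α - 1) * ((1 - x) ^ α - 1))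
      - (2 * α + 1) * (∫ x in (0 : ℝ)..1, x ^ α * (1 - x) ^ α) = -1 := by
  have hI := (intervalIntegrable_rpow_sub_one_mul_one_sub_rpow_sub_one hα hα').const_mul α
  have hB := (intervalIntegrable_rpow_mul_one_sub_rpow hα hα).const_mul (2 * α + 1)
  have hFTC := intervalIntegral.integral_eq_sub_of_hasDerivAt_of_tendsto zero_lt_one
    (fun x hx => hasDerivAt_regBetaPrimitive α hx) (hI.sub hB)
    (tendsto_regBetaPrimitive_zero hα hα')
    ((continuousAt_regBetaPrimitive_one hα).continuousWithinAt.tendsto)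
  rw [intervalIntegral.integral_sub hI hB, intervalIntegral.integral_const_mul,
    intervalIntegral.integral_const_mul, regBetaPrimitive_one hα, sub_zero] at hFTC
  exact hFTC

theorem stmt_18 (α : ℝ) (h0 : -(1/2) < α) (h1 : α < 0) :
    (∫ x in (0:ℝ)..1, x ^ (α - 1) * ((1 - x) ^ α - 1)) + 1/α
      = Real.Gamma α * Real.Gamma (α + 1) / Real.Gamma (2*α + 1) := by
  have hα : α ≠ 0 := h1.ne
  have h2α : 2 * α + 1 ≠ 0 := by linarith
  have hΓ : Real.Gamma (2 * α + 1) ≠ 0 := (Real.Gamma_pos_of_pos (by linarith)).ne'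
  have hFTC := regularized_beta_integral_identity (by linarith) h1.le
  have hBeta := integral_rpow_mul_one_sub_rpow (a := α + 1) (b := α + 1) (by linarith) (by linarith)
  rw [add_sub_cancel_right, show α + 1 + (α + 1) = 2 * α + 1 + 1 by ring,
    Real.Gamma_add_one h2α, Real.Gamma_add_one hα, eq_div_iff (mul_ne_zero h2α hΓ)] at hBeta
  rw [Real.Gamma_add_one hα, eq_div_iff hΓ]
  -- `field_simp` would rewrite the argument `2 * α + 1` of `Γ` to `α * 2 + 1`
  generalize Real.Gamma (2 * α + 1) = Γ₂ at hBeta ⊢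
  field_simp
  linear_combination Γ₂ * hFTC + hBeta
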